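/- arXiv:1210.0011 — 4 statements merged into one kernel-verified Lean document; each statement's English description precedes it below -/
import Mathlib

section
/- Let b, B be real numbers with 1 < b ≤ B, and let φ, χ : W → ℝ be positive functions on a set W such that b ≤ φ(x)/χ(x) ≤ B for all x ∈ W. Suppose there are constants C_r > 0 and θ ∈ (0,1) and a function s : W × W → ℕ with s(x,y) = s(y,x), such that |log φ(x) − log φ(y)| ≤ C_r·θ^{s(x,y)} and |log χ(x) − log χ(y)| ≤ C_r·θ^{s(x,y)} for all x,y ∈ W. Then the difference ψ = φ − χ is positive and there exists a constant C_top > 0, depending only on C_r and θ, such that |log ψ(x) − log ψ(y)| ≤ C_top·((B+1)/(b−1))·θ^{s(x,y)} for all x, y ∈ W. -/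
private lemma exp_sub_one_abs_le (t : ℝ) : |Real.exp t - 1| ≤ |t| * Real.exp |t| := by
  rcases le_or_gt 0 t with h | h
  · rw [abs_of_nonneg h, abs_of_nonneg (by nlinarith [Real.add_one_le_exp t] : (0:ℝ) ≤ Real.exp t - 1)]
    have h1 : -t + 1 ≤ Real.exp (-t) := Real.add_one_le_exp _
    have h2 : Real.exp (-t) * Real.exp t = 1 := by
      rw [← Real.exp_add]; simp
    nlinarith [Real.exp_pos t]
  · rw [abs_of_neg h, abs_of_nonpos (by nlinarith [Real.exp_lt_one_iff.mpr h] : Real.exp t - 1 ≤ 0)]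
    have h1 : t + 1 ≤ Real.exp t := Real.add_one_le_exp t
    have h2 : 1 ≤ Real.exp (-t) := by
      rw [Real.one_le_exp_iff]; linarith
    nlinarith

private lemma aux_top (C_r θ : ℝ) (hCr : 0 < C_r) (hθ0 : 0 < θ) (hθ1 : θ < 1)
    (W : Type) (φ χ : W → ℝ) (b B : ℝ) (s : W → W → ℕ)
    (hb : 1 < b) (hbB : b ≤ B)
    (hφ : ∀ x, 0 < φ x) (hχ : ∀ x, 0 < χ x)
    (hlb : ∀ x, b ≤ φ x / χ x)
    (hφr : ∀ x y, |Real.log (φ x) - Real.log (φ y)| ≤ C_r * θ ^ s x y)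
    (hχr : ∀ x y, |Real.log (χ x) - Real.log (χ y)| ≤ C_r * θ ^ s x y)
    (x y : W) :
    Real.log (φ x - χ x) - Real.log (φ y - χ y) ≤
      (C_r * (1 + 2 * Real.exp (2 * C_r))) * ((B + 1) / (b - 1)) * θ ^ s x y := by
  have hb1 : 0 < b - 1 := by linarith
  have hψ : ∀ z, 0 < φ z - χ z := by
    intro z
    have h := hlb z
    have hc := hχ z
    rw [le_div_iff₀ hc] at h
    nlinarith
  have ht0 : 0 < θ ^ s x y := pow_pos hθ0 _
  have ht1 : θ ^ s x y ≤ 1 := pow_le_one₀ hθ0.le hθ1.le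
  set t : ℝ := θ ^ s x y with htdef
  set E : ℝ := Real.exp C_r with hEdef
  have hE0 : 0 < E := Real.exp_pos _
  set a : ℝ := φ x / φ y with hadef
  set c : ℝ := χ x / χ y with hcdef
  have ha0 : 0 < a := div_pos (hφ x) (hφ y)
  have hc0 : 0 < c := div_pos (hχ x) (hχ y)
  have hloga : |Real.log a| ≤ C_r * t := by
    rw [hadef, Real.log_div (hφ x).ne' (hφ y).ne']
    exact hφr x y
  have hlogc : |Real.log c| ≤ C_r * t := by
    rw [hcdef, Real.log_div (hχ x).ne' (hχ y).ne']
    exact hχr x y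
  have hCt : C_r * t ≤ C_r := by nlinarith
  have habs : ∀ u : ℝ, 0 < u → |Real.log u| ≤ C_r * t → |u - 1| ≤ C_r * t * E := by
    intro u hu hlog
    have h1 : |u - 1| = |Real.exp (Real.log u) - 1| := by rw [Real.exp_log hu]
    rw [h1]
    calc |Real.exp (Real.log u) - 1| ≤ |Real.log u| * Real.exp |Real.log u| :=
          exp_sub_one_abs_le _
      _ ≤ (C_r * t) * E := by
          apply mul_le_mul hlog (Real.exp_le_exp.mpr (hlog.trans hCt)) (Real.exp_pos _).le
          positivity
  have ha1 := habs a ha0 hloga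
  have hc1 := habs c hc0 hlogc
  have hac : |a - c| ≤ 2 * C_r * t * E := by
    have h : |a - c| ≤ |a - 1| + |c - 1| := by
      calc |a - c| = |(a - 1) - (c - 1)| := by ring_nf
        _ ≤ |a - 1| + |c - 1| := abs_sub _ _
    linarith
  have hainv : E⁻¹ ≤ a := by
    rw [← Real.exp_log ha0, hEdef, ← Real.exp_neg]
    apply Real.exp_le_exp.mpr
    have := abs_le.mp hloga
    linarith
  have hψχ : (b - 1) * χ y ≤ φ y - χ y := by
    have h := hlb y
    rw [le_div_iff₀ (hχ y)] at h
    nlinarith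
  have hid : φ x - χ x = a * (φ y - χ y) + (a - c) * χ y := by
    have h1 : a * φ y = φ x := div_mul_cancel₀ _ (hφ y).ne'
    have h2 : c * χ y = χ x := div_mul_cancel₀ _ (hχ y).ne'
    nlinarith [h1, h2]
  set D : ℝ := 2 * C_r * t * E * E / (b - 1) with hDdef
  have hD0 : 0 ≤ D := by
    apply div_nonneg _ hb1.le
    positivity
  have hkey : φ x - χ x ≤ (1 + D) * (a * (φ y - χ y)) := by
    have h1 : (a - c) * χ y ≤ |a - c| * χ y :=
      mul_le_mul_of_nonneg_right (le_abs_self _) (hχ y).le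
    have h2 : |a - c| * χ y ≤ (2 * C_r * t * E) * χ y :=
      mul_le_mul_of_nonneg_right hac (hχ y).le
    have h3 : (2 * C_r * t * E) * χ y ≤ D * (a * (φ y - χ y)) := by
      have h4 : E⁻¹ * ((b - 1) * χ y) ≤ a * (φ y - χ y) := by
        exact mul_le_mul hainv hψχ (mul_nonneg hb1.le (hχ y).le) ha0.le
      have h5 : D * (E⁻¹ * ((b - 1) * χ y)) ≤ D * (a * (φ y - χ y)) :=
        mul_le_mul_of_nonneg_left h4 hD0
      have h6 : D * (E⁻¹ * ((b - 1) * χ y)) = (2 * C_r * t * E) * χ y := by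
        rw [hDdef]
        field_simp
      linarith
    nlinarith [hid]
  have hlog2 : Real.log (φ x - χ x) - Real.log a - Real.log (φ y - χ y) ≤ D := by
    have h1 : Real.log (φ x - χ x) - Real.log a - Real.log (φ y - χ y)
        = Real.log ((φ x - χ x) / (a * (φ y - χ y))) := by
      rw [Real.log_div (hψ x).ne' (mul_pos ha0 (hψ y)).ne', Real.log_mul ha0.ne' (hψ y).ne']
      ring
    rw [h1]
    have h2 : (φ x - χ x) / (a * (φ y - χ y)) ≤ 1 + D := by
      rw [div_le_iff₀ (mul_pos ha0 (hψ y))]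
      linarith [hkey]
    calc Real.log ((φ x - χ x) / (a * (φ y - χ y)))
        ≤ (φ x - χ x) / (a * (φ y - χ y)) - 1 :=
          Real.log_le_sub_one_of_pos (div_pos (hψ x) (mul_pos ha0 (hψ y)))
      _ ≤ D := by linarith
  have hloga' : Real.log a ≤ C_r * t := (abs_le.mp hloga).2
  have hE2 : Real.exp (2 * C_r) = E * E := by
    rw [hEdef, ← Real.exp_add]; ring_nf
  have hBb : (1:ℝ) ≤ (B + 1) / (b - 1) := by
    rw [le_div_iff₀ hb1]; linarith
  have hBb2 : 1 / (b - 1) ≤ (B + 1) / (b - 1) := by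
    gcongr
    linarith
  set Q : ℝ := (B + 1) / (b - 1) with hQdef
  have k1 : C_r * t * 1 ≤ C_r * t * Q := by
    apply mul_le_mul_of_nonneg_left hBb (by positivity)
  have k2 : (2 * C_r * t * E * E) * (1 / (b - 1)) ≤ (2 * C_r * t * E * E) * Q :=
    mul_le_mul_of_nonneg_left hBb2 (by positivity)
  have hDQ : D = (2 * C_r * t * E * E) * (1 / (b - 1)) := by
    rw [hDdef]; ring
  rw [hE2]
  calc Real.log (φ x - χ x) - Real.log (φ y - χ y) ≤ C_r * t + D := by linarith
    _ ≤ C_r * t * Q + (2 * C_r * t * E * E) * Q := by rw [hDQ]; linarith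
    _ = C_r * (1 + 2 * (E * E)) * Q * t := by ring

/-- Lemma "top density": the difference of two regular densities whose ratio is
bounded away from 1 satisfies a dynamical Hölder bound with constant
`C_top·(B+1)/(b−1)`, where `C_top` depends only on `C_r` and `θ`. -/
theorem stmt_0 (C_r θ : ℝ) (hCr : 0 < C_r) (hθ0 : 0 < θ) (hθ1 : θ < 1) :
    ∃ C_top : ℝ, 0 < C_top ∧
      ∀ (W : Type) (φ χ : W → ℝ) (b B : ℝ) (s : W → W → ℕ),
        1 < b → b ≤ B →
        (∀ x, 0 < φ x) → (∀ x, 0 < χ x) →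
        (∀ x, b ≤ φ x / χ x) → (∀ x, φ x / χ x ≤ B) →
        (∀ x y, s x y = s y x) →
        (∀ x y, |Real.log (φ x) - Real.log (φ y)| ≤ C_r * θ ^ s x y) →
        (∀ x y, |Real.log (χ x) - Real.log (χ y)| ≤ C_r * θ ^ s x y) →
        (∀ x, 0 < φ x - χ x) ∧
        (∀ x y, |Real.log (φ x - χ x) - Real.log (φ y - χ y)| ≤
          C_top * ((B + 1) / (b - 1)) * θ ^ s x y) := by
  refine ⟨C_r * (1 + 2 * Real.exp (2 * C_r)), by positivity, ?_⟩
  intro W φ χ b B s hb hbB hφ hχ hlb hub hs hφr hχr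
  have hψ : ∀ z, 0 < φ z - χ z := by
    intro z
    have h := hlb z
    have hc := hχ z
    rw [le_div_iff₀ hc] at h
    nlinarith
  refine ⟨hψ, ?_⟩
  intro x y
  rw [abs_sub_le_iff]
  constructor
  · exact aux_top C_r θ hCr hθ0 hθ1 W φ χ b B s hb hbB hφ hχ hlb hφr hχr x y
  · have h := aux_top C_r θ hCr hθ0 hθ1 W φ χ b B s hb hbB hφ hχ hlb hφr hχr y x
    rwa [hs y x] at h
end

section
/- Let ζ ∈ (0,1) and let (t_k)_{k≥1} be a strictly increasing sequence of positive integers. Let (C_k) be a sequence of reals with C_k ≥ 1, λ ∈ (0,1), and suppose that C_j·λ^{t_{k}−t_j} ≤ (½ζ(1−ζ))^{k−j} for all 1 ≤ j < k (for all k ≥ 2). Define Q_1 = 1 and Q_{k+1} = (1−ζ)Q_k + Σ_{j=1}^{k−1} C_j λ^{t_{k−1}−t_j+u_{k−1}} Q_j, where u_k = t_{k+1} − t_k − s_{k+1} for given integers s_k ≥ 0, and assume additionally C_{k}·λ^{u_{k}} ≤ ½ζ(1−ζ) for all k ≥ 1 and λ^{s_k} ≤ C_k for all k. Then Q_{k+1}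 ≤ (1 − ½ζ)·Q_k for all k ≥ 1, and consequently Q_k ≤ (1 − ½ζ)^{k−1} for all k ≥ 1. -/
/-- The recursion bounding the total uncoupled mass in the coupling argument
(Lemma on `P_bound`). -/
theorem stmt_2 (ζ lam : ℝ) (hζ : ζ ∈ Set.Ioo (0:ℝ) 1) (hlam : lam ∈ Set.Ioo (0:ℝ) 1)
    (t s u : ℕ → ℕ) (C Q : ℕ → ℝ)
    (ht_mono : ∀ k ≥ 1, t k < t (k + 1))
    (ht_pos : 0 < t 1)
    (hu : ∀ k ≥ 1, t (k + 1) = t k + s (k + 1) + u k)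
    (hC : ∀ k ≥ 1, 1 ≤ C k)
    (hCt : ∀ k ≥ 2, ∀ j, 1 ≤ j → j < k →
      C j * lam ^ (t k - t j) ≤ (ζ / 2 * (1 - ζ)) ^ (k - j))
    (hCu : ∀ k ≥ 1, C k * lam ^ u k ≤ ζ / 2 * (1 - ζ))
    (hs : ∀ k ≥ 1, lam ^ s k ≤ C k)
    (hQ1 : Q 1 = 1)
    (hQrec : ∀ k ≥ 1, Q (k + 1) =
      (1 - ζ) * Q k + ∑ j ∈ Finset.Ico 1 k, C j * lam ^ (t (k - 1) - t j + u (k - 1)) * Q j) :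
    (∀ k ≥ 1, Q (k + 1) ≤ (1 - ζ / 2) * Q k) ∧
    (∀ k ≥ 1, Q k ≤ (1 - ζ / 2) ^ (k - 1)) := by
  obtain ⟨hζ0, hζ1⟩ := hζ
  obtain ⟨hl0, hl1⟩ := hlam
  -- monotonicity of t on [1, ∞)
  have htmono : ∀ m, 1 ≤ m → ∀ j, 1 ≤ j → j ≤ m → t j ≤ t m := by
    intro m hm
    induction m with
    | zero => omega
    | succ n ih =>
      intro j hj hjm
      rcases Nat.lt_or_ge j (n + 1) with h | h
      · have hn : 1 ≤ n := by omega
        exact le_trans (ih hn j hj (by omega)) (le_of_lt (ht_mono n hn))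
      · have hje : j = n + 1 := by omega
        rw [hje]
  -- key induction: nonnegativity and the gap-sum bound
  have key : ∀ k, 1 ≤ k → (∀ j, 1 ≤ j → j ≤ k → 0 ≤ Q j) ∧
      (∑ j ∈ Finset.Ico 1 k, C j * lam ^ (t (k - 1) - t j + u (k - 1)) * Q j)
        ≤ ζ / 2 * Q k := by
    intro k hk
    induction k with
    | zero => omega
    | succ n ih =>
      rcases Nat.lt_or_ge n 1 with hn | hn
      · have hn0 : n = 0 := by omega
        subst hn0
        constructor
        · intro j hj hj1
          have hje : j = 1 := by omega
          rw [hje, hQ1]; norm_num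
        · simp [hQ1]
          positivity
      · obtain ⟨hQnn, hS⟩ := ih hn
        have hSnn : 0 ≤ ∑ j ∈ Finset.Ico 1 n,
            C j * lam ^ (t (n - 1) - t j + u (n - 1)) * Q j := by
          apply Finset.sum_nonneg
          intro j hj
          simp only [Finset.mem_Ico] at hj
          have hQj := hQnn j hj.1 (by omega)
          have hCj := hC j hj.1
          have : (0:ℝ) ≤ lam ^ (t (n - 1) - t j + u (n - 1)) := by positivity
          exact mul_nonneg (mul_nonneg (by linarith) this) hQj
        have hQn := hQnn n hn le_rfl
        have hQn1nn : 0 ≤ Q (n + 1) := by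
          rw [hQrec n hn]
          nlinarith
        have hQnn' : ∀ j, 1 ≤ j → j ≤ n + 1 → 0 ≤ Q j := by
          intro j hj hj1
          rcases Nat.lt_or_ge j (n + 1) with h | h
          · exact hQnn j hj (by omega)
          · have hje : j = n + 1 := by omega
            rw [hje]; exact hQn1nn
        refine ⟨hQnn', ?_⟩
        simp only [Nat.add_sub_cancel]
        rw [Finset.sum_Ico_succ_top hn, hQrec n hn]
        have hlast : C n * lam ^ (t n - t n + u n) * Q n ≤ ζ / 2 * (1 - ζ) * Q n := by
          rw [Nat.sub_self, Nat.zero_add]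
          exact mul_le_mul_of_nonneg_right (hCu n hn) hQn
        have hrest : ∑ j ∈ Finset.Ico 1 n, C j * lam ^ (t n - t j + u n) * Q j
            ≤ ζ / 2 * ∑ j ∈ Finset.Ico 1 n,
              C j * lam ^ (t (n - 1) - t j + u (n - 1)) * Q j := by
          rw [Finset.mul_sum]
          apply Finset.sum_le_sum
          intro j hj
          simp only [Finset.mem_Ico] at hj
          have hn2 : 2 ≤ n := by omega
          have htn : t n = t (n - 1) + s n + u (n - 1) := by
            have h := hu (n - 1) (by omega)
            rwa [show n - 1 + 1 = n by omega] at h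
          have hjle : t j ≤ t (n - 1) := htmono (n - 1) (by omega) j hj.1 (by omega)
          have hexp : t n - t j + u n = (s n + u n) + (t (n - 1) - t j + u (n - 1)) := by
            omega
          rw [hexp, pow_add, pow_add]
          have h1 : lam ^ s n * lam ^ u n ≤ ζ / 2 := by
            calc lam ^ s n * lam ^ u n ≤ C n * lam ^ u n :=
                  mul_le_mul_of_nonneg_right (hs n hn) (by positivity)
              _ ≤ ζ / 2 * (1 - ζ) := hCu n hn
              _ ≤ ζ / 2 := by nlinarith
          have hQj := hQnn j hj.1 (by omega)
          have hCj : (0:ℝ) ≤ C j := le_trans zero_le_one (hC j hj.1)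
          have hb : (0:ℝ) ≤ lam ^ (t (n - 1) - t j + u (n - 1)) := by positivity
          calc C j * (lam ^ s n * lam ^ u n * lam ^ (t (n - 1) - t j + u (n - 1))) * Q j
              = (lam ^ s n * lam ^ u n) * (C j * lam ^ (t (n - 1) - t j + u (n - 1)) * Q j) := by
                ring
            _ ≤ ζ / 2 * (C j * lam ^ (t (n - 1) - t j + u (n - 1)) * Q j) :=
                mul_le_mul_of_nonneg_right h1 (by positivity)
        nlinarith
  have first : ∀ k ≥ 1, Q (k + 1) ≤ (1 - ζ / 2) * Q k := by
    intro k hk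
    rw [hQrec k hk]
    have hS := (key k hk).2
    linarith
  refine ⟨first, ?_⟩
  intro k hk
  induction k with
  | zero => omega
  | succ n ih =>
    rcases Nat.lt_or_ge n 1 with hn | hn
    · have hn0 : n = 0 := by omega
      subst hn0
      simp [hQ1]
    · have h1 := first n hn
      have h2 := ih hn
      have hnn : (0:ℝ) ≤ 1 - ζ / 2 := by linarith
      calc Q (n + 1) ≤ (1 - ζ / 2) * Q n := h1
        _ ≤ (1 - ζ / 2) * (1 - ζ / 2) ^ (n - 1) := mul_le_mul_of_nonneg_left h2 hnn
        _ = (1 - ζ / 2) ^ (n + 1 - 1) := by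
            rw [← pow_succ']
            congr 1
            omega
end

section
/- Let Λ > 1 and ζ̃ ∈ (0,1), ĉ ∈ (0,1], Δ ≥ 1, γ > 0. Suppose for two probability measures μ¹, μ² and maps 𝓕_n one has, for every n: (i) the uncoupled masses satisfy μ^i_{⌊n/2⌋}(M) ≤ (1−½ζ̃)^{n/(2Δ)−1}; (ii) for every j ≤ n/2, the coupled pieces satisfy |∫ f∘𝓕_n dμ̄¹_j − ∫ f∘𝓕_n dμ̄²_j| ≤ (μ̄¹_j(M) + μ̄²_j(M))·|f|_γ·(ĉ^{−1}Λ^{−(n−j)})^γ with Σ_j μ̄^i_j(M) ≤ 1. Then |∫ f∘𝓕_n dμ¹ − ∫ f∘𝓕_n dμ²| ≤ C_γ·(‖f‖_∞ + |f|_γ)·θ_γ^n for all n, where C_γ = 2·max((1−½ζ̃)^{−1}, ĉ^{−γ}) and θ_γ = max((1−½ζ̃)^{1/(2Δ)}, Λ^{−γ/2}). -/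
/-! Split both measures into the coupled pieces `mbar j`, `j ≤ n/2`, and the uncoupled rest.
On the rest only `‖f‖_∞` is available, and its mass decays like `(1 - ζ/2)^(n/(2Δ))`. The
coupled pieces of equal index are matched along stable manifolds contracted by `c⁻¹Λ^{-(n-j)}`
with `n - j ≥ n/2`, so each costs at most its mass times `|f|_γ c^{-γ} Λ^{-γn/2}`; the masses
add up to at most `2`. -/

open MeasureTheory

namespace MeasureTheory

variable {X ι : Type*} [MeasurableSpace X]

theorem integral_finsetSum_add_measure {s : Finset ι} {ν : ι → Measure X} {ρ : Measure X}
    {g : X → ℝ} (hg : Integrable g (∑ j ∈ s, ν j + ρ)) :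
    ∫ x, g x ∂(∑ j ∈ s, ν j + ρ) = ∑ j ∈ s, ∫ x, g x ∂(ν j) + ∫ x, g x ∂ρ := by
  have hsum : Integrable g (∑ j ∈ s, ν j) := hg.mono_measure (Measure.le_add_right le_rfl)
  rw [integral_add_measure hsum (hg.mono_measure (Measure.le_add_left le_rfl)),
    integral_finsetSum_measure fun j hj =>
      hsum.mono_measure (Finset.single_le_sum (fun _ _ => Measure.zero_le _) hj)]

theorem abs_integral_le_mul_measure_univ (ρ : Measure X) [IsFiniteMeasure ρ] {g : X → ℝ}
    {M : ℝ} (hgM : ∀ x, |g x| ≤ M) : |∫ x, g x ∂ρ| ≤ M * (ρ Set.univ).toReal :=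
  norm_integral_le_of_norm_le_const (f := g) (ae_of_all _ hgM)

theorem abs_integral_sub_le_of_eq_sum_add {μ₁ μ₂ ρ₁ ρ₂ : Measure X} {ν₁ ν₂ : ι → Measure X}
    {s : Finset ι} [IsFiniteMeasure μ₁] [IsFiniteMeasure μ₂]
    (h₁ : μ₁ = ∑ j ∈ s, ν₁ j + ρ₁) (h₂ : μ₂ = ∑ j ∈ s, ν₂ j + ρ₂)
    {g : X → ℝ} (hg : Measurable g) {M : ℝ} (hgM : ∀ x, |g x| ≤ M) :
    |(∫ x, g x ∂μ₁) - ∫ x, g x ∂μ₂| ≤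
      ∑ j ∈ s, |(∫ x, g x ∂(ν₁ j)) - ∫ x, g x ∂(ν₂ j)| +
        M * (ρ₁ Set.univ).toReal + M * (ρ₂ Set.univ).toReal := by
  have hint (μ : Measure X) [IsFiniteMeasure μ] : Integrable g μ :=
    .of_bound hg.aestronglyMeasurable M (ae_of_all _ hgM)
  have : IsFiniteMeasure ρ₁ := isFiniteMeasure_of_le μ₁ (h₁ ▸ Measure.le_add_left le_rfl)
  have : IsFiniteMeasure ρ₂ := isFiniteMeasure_of_le μ₂ (h₂ ▸ Measure.le_add_left le_rfl)
  subst h₁ h₂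
  rw [integral_finsetSum_add_measure (hint _), integral_finsetSum_add_measure (hint _),
    add_sub_add_comm, ← Finset.sum_sub_distrib]
  calc _ ≤ |∑ j ∈ s, ((∫ x, g x ∂(ν₁ j)) - ∫ x, g x ∂(ν₂ j))| +
        (|∫ x, g x ∂ρ₁| + |∫ x, g x ∂ρ₂|) :=
        (abs_add_le _ _).trans (add_le_add le_rfl (abs_sub _ _))
    _ ≤ _ := by
      rw [← add_assoc]
      gcongr
      · exact Finset.abs_sum_le_sum_abs _ _
      · exact abs_integral_le_mul_measure_univ ρ₁ hgM
      · exact abs_integral_le_mul_measure_univ ρ₂ hgM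

end MeasureTheory

theorem Finset.sum_abs_le_two_mul_of_abs_le_add_mul {ι : Type*} {s : Finset ι}
    {d a b : ι → ℝ} {K : ℝ} (hK : 0 ≤ K) (hd : ∀ j ∈ s, |d j| ≤ (a j + b j) * K)
    (ha : ∑ j ∈ s, a j ≤ 1) (hb : ∑ j ∈ s, b j ≤ 1) : ∑ j ∈ s, |d j| ≤ 2 * K :=
  calc ∑ j ∈ s, |d j| ≤ ∑ j ∈ s, (a j + b j) * K := Finset.sum_le_sum hd
    _ = (∑ j ∈ s, a j + ∑ j ∈ s, b j) * K := by rw [← Finset.sum_mul, Finset.sum_add_distrib]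
    _ ≤ 2 * K := by gcongr; linarith

theorem Real.inv_mul_inv_pow_sub_rpow_le {c Λ γ : ℝ} (hc : 0 < c) (hΛ : 1 ≤ Λ) (hγ : 0 ≤ γ)
    {n j : ℕ} (hj : j ≤ n / 2) :
    (c⁻¹ * (Λ ^ (n - j))⁻¹) ^ γ ≤ c ^ (-γ) * (Λ ^ (-(γ / 2))) ^ n := by
  have hΛ0 : 0 < Λ := one_pos.trans_le hΛ
  have hjn : 2 * (j : ℝ) ≤ n := by exact_mod_cast (Nat.mul_div_le n 2).trans' (by omega)
  rw [Real.mul_rpow (inv_nonneg.2 hc.le) (inv_nonneg.2 (pow_nonneg hΛ0.le _)),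
    Real.inv_rpow hc.le, ← Real.rpow_neg hc.le, ← Real.rpow_natCast Λ (n - j),
    ← Real.rpow_neg hΛ0.le, ← Real.rpow_mul hΛ0.le, ← Real.rpow_natCast _ n,
    ← Real.rpow_mul hΛ0.le, Nat.cast_sub (by omega)]
  exact mul_le_mul_of_nonneg_left (Real.rpow_le_rpow_of_exponent_le hΛ (by nlinarith))
    (by positivity)

theorem Real.rpow_natCast_div_sub_one {b : ℝ} (hb : 0 < b) (n : ℕ) (a : ℝ) :
    b ^ ((n : ℝ) / a - 1) = b⁻¹ * (b ^ (1 / a)) ^ n := by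
  rw [← Real.rpow_natCast, ← Real.rpow_mul hb.le, ← Real.rpow_neg_one, ← Real.rpow_add hb]
  ring_nf

theorem add_le_two_mul_max_mul_max_pow {M K p q x y : ℝ} (hM : 0 ≤ M) (hK : 0 ≤ K)
    (hq : 0 ≤ q) (hx : 0 ≤ x) (hy : 0 ≤ y) (n : ℕ) :
    2 * (K * (p * x ^ n)) + M * (q * y ^ n) + M * (q * y ^ n) ≤
      2 * max q p * (M + K) * max y x ^ n := by
  have hpx : p * x ^ n ≤ max q p * max y x ^ n := by gcongr <;> simp
  have hqy : q * y ^ n ≤ max q p * max y x ^ n := by gcongr <;> simp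
  nlinarith [mul_le_mul_of_nonneg_left hpx hK, mul_le_mul_of_nonneg_left hqy hM]

theorem stmt_15_general {X : Type*} [MeasurableSpace X]
    (𝓕 : ℕ → X → X) (h𝓕meas : ∀ n, Measurable (𝓕 n))
    (μ1 μ2 : Measure X) [IsProbabilityMeasure μ1] [IsProbabilityMeasure μ2]
    (mbar1 mbar2 rest1 rest2 : ℕ → Measure X)
    (ζ Λ c : ℝ) (Δ : ℕ) (γ : ℝ)
    (hζ : ζ ∈ Set.Ioo (0:ℝ) 1) (hΛ : 1 < Λ) (hc0 : 0 < c)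
    (hγ : 0 < γ)
    (hdec1 : ∀ n : ℕ, μ1 = (∑ j ∈ Finset.range (n / 2 + 1), mbar1 j) + rest1 (n / 2))
    (hdec2 : ∀ n : ℕ, μ2 = (∑ j ∈ Finset.range (n / 2 + 1), mbar2 j) + rest2 (n / 2))
    (hrest1 : ∀ n : ℕ, (rest1 (n / 2) Set.univ).toReal ≤
      (1 - ζ / 2) ^ ((n : ℝ) / (2 * (Δ : ℝ)) - 1))
    (hrest2 : ∀ n : ℕ, (rest2 (n / 2) Set.univ).toReal ≤
      (1 - ζ / 2) ^ ((n : ℝ) / (2 * (Δ : ℝ)) - 1))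
    (hmass1 : ∀ m : ℕ, (∑ j ∈ Finset.range (m + 1), (mbar1 j Set.univ).toReal) ≤ 1)
    (hmass2 : ∀ m : ℕ, (∑ j ∈ Finset.range (m + 1), (mbar2 j Set.univ).toReal) ≤ 1) :
    ∀ (f : X → ℝ) (Mf Kf : ℝ), Measurable f → (∀ x, |f x| ≤ Mf) → 0 ≤ Kf →
      (∀ n j : ℕ, j ≤ n / 2 →
        |(∫ x, f (𝓕 n x) ∂(mbar1 j)) - ∫ x, f (𝓕 n x) ∂(mbar2 j)| ≤
          ((mbar1 j Set.univ).toReal + (mbar2 j Set.univ).toReal) * Kf *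
            (c⁻¹ * (Λ ^ (n - j))⁻¹) ^ γ) →
      ∀ n : ℕ,
        |(∫ x, f (𝓕 n x) ∂μ1) - ∫ x, f (𝓕 n x) ∂μ2| ≤
          2 * max (1 - ζ / 2)⁻¹ (c ^ (-γ)) * (Mf + Kf) *
            (max ((1 - ζ / 2) ^ ((1 : ℝ) / (2 * (Δ : ℝ)))) (Λ ^ (-(γ / 2)))) ^ n := by
  intro f Mf Kf hf hfM hKf hcoupled n
  have hb : 0 < 1 - ζ / 2 := by linarith [hζ.2]
  have hMf : 0 ≤ Mf := (abs_nonneg _).trans (hfM (nonempty_of_isProbabilityMeasure μ1).some)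
  have hcoup : ∑ j ∈ Finset.range (n / 2 + 1),
      |(∫ x, f (𝓕 n x) ∂(mbar1 j)) - ∫ x, f (𝓕 n x) ∂(mbar2 j)| ≤
        2 * (Kf * (c ^ (-γ) * (Λ ^ (-(γ / 2))) ^ n)) := by
    refine Finset.sum_abs_le_two_mul_of_abs_le_add_mul (by positivity) (fun j hj => ?_)
      (hmass1 (n / 2)) (hmass2 (n / 2))
    have hjn := Finset.mem_range_succ_iff.1 hj
    rw [← mul_assoc]
    exact (hcoupled n j hjn).trans <| by
      gcongr; exact Real.inv_mul_inv_pow_sub_rpow_le hc0 hΛ.le hγ.le hjn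
  calc _ ≤ _ := abs_integral_sub_le_of_eq_sum_add (g := fun x => f (𝓕 n x)) (hdec1 n) (hdec2 n)
        (hf.comp (h𝓕meas n)) fun x => hfM (𝓕 n x)
    _ ≤ 2 * (Kf * (c ^ (-γ) * (Λ ^ (-(γ / 2))) ^ n)) +
          Mf * ((1 - ζ / 2)⁻¹ * ((1 - ζ / 2) ^ ((1 : ℝ) / (2 * (Δ : ℝ)))) ^ n) +
          Mf * ((1 - ζ / 2)⁻¹ * ((1 - ζ / 2) ^ ((1 : ℝ) / (2 * (Δ : ℝ)))) ^ n) := by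
      rw [← Real.rpow_natCast_div_sub_one hb]
      gcongr
      exacts [hrest1 n, hrest2 n]
    _ ≤ _ := add_le_two_mul_max_mul_max_pow hMf hKf (by positivity) (by positivity)
        (by positivity) n

/-- Final memory-loss estimate assembly: combining the decay of the uncoupled mass with
the Hölder-observable estimate for the coupled pieces yields exponential memory loss
with `C_γ = 2·max((1−½ζ)⁻¹, ĉ^{−γ})` and `θ_γ = max((1−½ζ)^{1/(2Δ)}, Λ^{−γ/2})`. -/
theorem stmt_15 {X : Type*} [MeasurableSpace X]
    (𝓕 : ℕ → X → X) (h𝓕meas : ∀ n, Measurable (𝓕 n))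
    (μ1 μ2 : Measure X) [IsProbabilityMeasure μ1] [IsProbabilityMeasure μ2]
    (mbar1 mbar2 rest1 rest2 : ℕ → Measure X)
    (ζ Λ c : ℝ) (Δ : ℕ) (γ : ℝ)
    (hζ : ζ ∈ Set.Ioo (0:ℝ) 1) (hΛ : 1 < Λ) (hc0 : 0 < c) (hc1 : c ≤ 1)
    (hΔ : 1 ≤ Δ) (hγ : 0 < γ)
    (hdec1 : ∀ n : ℕ, μ1 = (∑ j ∈ Finset.range (n / 2 + 1), mbar1 j) + rest1 (n / 2))
    (hdec2 : ∀ n : ℕ, μ2 = (∑ j ∈ Finset.range (n / 2 + 1), mbar2 j) + rest2 (n / 2))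
    (hrest1 : ∀ n : ℕ, (rest1 (n / 2) Set.univ).toReal ≤
      (1 - ζ / 2) ^ ((n : ℝ) / (2 * (Δ : ℝ)) - 1))
    (hrest2 : ∀ n : ℕ, (rest2 (n / 2) Set.univ).toReal ≤
      (1 - ζ / 2) ^ ((n : ℝ) / (2 * (Δ : ℝ)) - 1))
    (hmass1 : ∀ m : ℕ, (∑ j ∈ Finset.range (m + 1), (mbar1 j Set.univ).toReal) ≤ 1)
    (hmass2 : ∀ m : ℕ, (∑ j ∈ Finset.range (m + 1), (mbar2 j Set.univ).toReal) ≤ 1) :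
    ∀ (f : X → ℝ) (Mf Kf : ℝ), Measurable f → (∀ x, |f x| ≤ Mf) → 0 ≤ Kf →
      (∀ n j : ℕ, j ≤ n / 2 →
        |(∫ x, f (𝓕 n x) ∂(mbar1 j)) - ∫ x, f (𝓕 n x) ∂(mbar2 j)| ≤
          ((mbar1 j Set.univ).toReal + (mbar2 j Set.univ).toReal) * Kf *
            (c⁻¹ * (Λ ^ (n - j))⁻¹) ^ γ) →
      ∀ n : ℕ,
        |(∫ x, f (𝓕 n x) ∂μ1) - ∫ x, f (𝓕 n x) ∂μ2| ≤
          2 * max (1 - ζ / 2)⁻¹ (c ^ (-γ)) * (Mf + Kf) *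
            (max ((1 - ζ / 2) ^ ((1 : ℝ) / (2 * (Δ : ℝ)))) (Λ ^ (-(γ / 2)))) ^ n :=
  stmt_15_general 𝓕 h𝓕meas μ1 μ2 mbar1 mbar2 rest1 rest2 ζ Λ c Δ γ hζ hΛ hc0 hγ hdec1 hdec2 hrest1
    hrest2 hmass1 hmass2
end

section
/- Let c > 0, C_e ≥ 1 and ĉ·Λ^n-expansion constants Λ > 1, and suppose: (a) a curve V has image lengths satisfying |𝓕_{R−1}V| ≥ C_e^{−2}·|𝓕_R V|² (Lemma on growth of homogeneous curves with |𝓕_R V| ≤ C_e|𝓕_{R−1}V|^{1/2}), and (b) |𝓕_R V| ≥ c_g·Λ^{−R}·ℓ for constants c_g > 0, ℓ ∈ (0,1]. Define 𝒵_{R−1} = ν(V)/|𝓕_{R−1}V| for a finite measure ν on V. Then 𝒵_{R−1}/ν(V) ≤ C_e²·c_g^{−2}·ℓ^{−2}·Λ^{2R}; consequently, using the contraction 𝒵_n/ν(V) ≤ (C_p/2)(1 + ϑ_p^{n−(R−1)}·𝒵_{R−1}/ν(V)) for n ≥ R−1, the measure becomes proper (𝒵_n ≤ C_p·ν(V)) for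 all n ≥ R − 1 + (2R·log Λ + |log(C_e²c_g^{−2})| + 2|log ℓ|)/|log ϑ_p|; in particular there is a constant c_p > 0, depending only on Λ, C_e, c_g, ϑ_p, with properness achieved within c_p·(R + |log ℓ|) steps. -/
set_option maxHeartbeats 1000000


/-- Lemma "gap_proper": a gap of rank `R` carries a measure whose `𝒵`-value is at most
`C_e² c_g⁻² ℓ⁻² Λ^{2R}` times its mass; by the exponential contraction of `𝒵` it becomes
proper within `c_p(R + |log ℓ|)` steps, for a constant `c_p` depending only on
`Λ, C_e, c_g, ϑ_p`. -/
theorem stmt_16 (Λ C_e c_g ϑ C_p : ℝ)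
    (hΛ : 1 < Λ) (hCe : 1 ≤ C_e) (hcg : 0 < c_g)
    (hϑ : ϑ ∈ Set.Ioo (0:ℝ) 1) (hCp : 1 < C_p) :
    ∃ c_p : ℝ, 0 < c_p ∧
      ∀ (ℓ mass : ℝ) (lens Z : ℕ → ℝ) (R : ℕ),
        0 < ℓ → ℓ ≤ 1 → 0 < mass → 1 ≤ R → (∀ n, 0 < lens n) →
        (lens R) ^ 2 / C_e ^ 2 ≤ lens (R - 1) →
        c_g * (Λ ^ R)⁻¹ * ℓ ≤ lens R →
        Z (R - 1) = mass / lens (R - 1) →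
        (∀ n, R - 1 ≤ n →
          Z n / mass ≤ C_p / 2 * (1 + ϑ ^ (n - (R - 1)) * (Z (R - 1) / mass))) →
        (Z (R - 1) / mass ≤ C_e ^ 2 * (c_g⁻¹) ^ 2 * (ℓ⁻¹) ^ 2 * Λ ^ (2 * R)) ∧
        (∀ n : ℕ, ((R : ℝ) - 1) +
            (2 * R * Real.log Λ + |Real.log (C_e ^ 2 / c_g ^ 2)| + 2 * |Real.log ℓ|) /
              |Real.log ϑ| ≤ (n : ℝ) →
          Z n ≤ C_p * mass) ∧
        (∀ n : ℕ, c_p * ((R : ℝ) + |Real.log ℓ|) ≤ (n : ℝ) → Z n ≤ C_p * mass) := by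
  obtain ⟨hϑ0, hϑ1⟩ := hϑ
  have hlogϑ : Real.log ϑ < 0 := Real.log_neg hϑ0 hϑ1
  have habs : |Real.log ϑ| = -Real.log ϑ := abs_of_neg hlogϑ
  have ht : (0:ℝ) < |Real.log ϑ| := by rw [habs]; linarith
  set A := |Real.log (C_e ^ 2 / c_g ^ 2)| with hAdef
  have hA0 : 0 ≤ A := abs_nonneg _
  have hL : 0 < Real.log Λ := Real.log_pos hΛ
  refine ⟨1 + (2 * Real.log Λ + A + 2) / |Real.log ϑ|, by positivity, ?_⟩
  intro ℓ mass lens Z R hℓ hℓ1 hm hR hlens hgrow hgap hZval hcontr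
  have hRr : (1:ℝ) ≤ (R:ℝ) := by exact_mod_cast hR
  have hx0 : 0 ≤ |Real.log ℓ| := abs_nonneg _
  have hxeq : |Real.log ℓ| = -Real.log ℓ := abs_of_nonpos (Real.log_nonpos hℓ.le hℓ1)
  have hPpos : (0:ℝ) < Λ ^ R := by positivity
  have hq : (0:ℝ) < c_g * (Λ ^ R)⁻¹ * ℓ := by positivity
  have hbpos := hlens (R - 1)
  set E := C_e ^ 2 * (c_g⁻¹) ^ 2 * (ℓ⁻¹) ^ 2 * Λ ^ (2 * R) with hEdef
  have hEpos : 0 < E := by positivity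
  -- first bullet
  have h1 : Z (R - 1) / mass = 1 / lens (R - 1) := by
    rw [hZval]; field_simp
  have h2 : (c_g * (Λ ^ R)⁻¹ * ℓ) ^ 2 ≤ C_e ^ 2 * lens (R - 1) := by
    have hs : (c_g * (Λ ^ R)⁻¹ * ℓ) ^ 2 ≤ (lens R) ^ 2 :=
      pow_le_pow_left₀ hq.le hgap 2
    have hCe2 : (0:ℝ) < C_e ^ 2 := by positivity
    have := (div_le_iff₀ hCe2).mp hgrow
    nlinarith
  have hEq : C_e ^ 2 / (c_g * (Λ ^ R)⁻¹ * ℓ) ^ 2 = E := by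
    have hp2 : Λ ^ (2 * R) = (Λ ^ R) ^ 2 := by rw [two_mul, pow_add, sq]
    rw [hEdef, hp2]
    field_simp
  have hBE : Z (R - 1) / mass ≤ E := by
    rw [h1, ← hEq]
    rw [div_le_div_iff₀ hbpos (by positivity)]
    linarith
  have part2 : ∀ n : ℕ, ((R : ℝ) - 1) +
      (2 * R * Real.log Λ + A + 2 * |Real.log ℓ|) / |Real.log ϑ| ≤ (n : ℝ) →
      Z n ≤ C_p * mass := by
      intro n hn
      have hD0 : 0 ≤ 2 * (R:ℝ) * Real.log Λ + A + 2 * |Real.log ℓ| := by positivity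
      have hRn : (R:ℝ) - 1 ≤ (n:ℝ) := by
        have : 0 ≤ (2 * (R:ℝ) * Real.log Λ + A + 2 * |Real.log ℓ|) / |Real.log ϑ| := by
          positivity
        linarith
      have hcast : ((R - 1 : ℕ) : ℝ) = (R:ℝ) - 1 := by
        rw [Nat.cast_sub hR, Nat.cast_one]
      have hn' : R - 1 ≤ n := by
        have : ((R - 1 : ℕ) : ℝ) ≤ (n:ℝ) := by rw [hcast]; exact hRn
        exact_mod_cast this
      set k := n - (R - 1) with hkdef
      have hkcast : (k:ℝ) = (n:ℝ) - ((R:ℝ) - 1) := by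
        rw [hkdef, Nat.cast_sub hn', hcast]
      have hkt : (2 * (R:ℝ) * Real.log Λ + A + 2 * |Real.log ℓ|) ≤ (k:ℝ) * |Real.log ϑ| := by
        have hk1 : (2 * (R:ℝ) * Real.log Λ + A + 2 * |Real.log ℓ|) / |Real.log ϑ| ≤ (k:ℝ) := by
          rw [hkcast]; linarith
        calc (2 * (R:ℝ) * Real.log Λ + A + 2 * |Real.log ℓ|)
            = (2 * (R:ℝ) * Real.log Λ + A + 2 * |Real.log ℓ|) / |Real.log ϑ| * |Real.log ϑ| :=
              (div_mul_cancel₀ _ ht.ne').symm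
          _ ≤ (k:ℝ) * |Real.log ϑ| :=
              mul_le_mul_of_nonneg_right hk1 ht.le
      have hlogE : Real.log E ≤ 2 * (R:ℝ) * Real.log Λ + A + 2 * |Real.log ℓ| := by
        have hE1 : E = (C_e ^ 2 / c_g ^ 2) * ((ℓ⁻¹) ^ 2 * Λ ^ (2 * R)) := by
          rw [hEdef, div_eq_mul_inv, ← inv_pow]; ring
        have hne1 : C_e ^ 2 / c_g ^ 2 ≠ 0 := by positivity
        have hne2 : (ℓ⁻¹) ^ 2 ≠ 0 := by positivity
        have hne3 : Λ ^ (2 * R) ≠ 0 := by positivity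
        rw [hE1, Real.log_mul hne1 (by positivity), Real.log_mul hne2 hne3,
          Real.log_pow, Real.log_pow, Real.log_inv]
        have : Real.log (C_e ^ 2 / c_g ^ 2) ≤ A := le_abs_self _
        rw [hxeq]
        push_cast
        linarith
      have hϑkE : ϑ ^ k ≤ E⁻¹ := by
        have h0 : (0:ℝ) < ϑ ^ k := by positivity
        have h0' : (0:ℝ) < E⁻¹ := by positivity
        rw [← Real.log_le_log_iff h0 h0', Real.log_pow, Real.log_inv]
        calc (k:ℝ) * Real.log ϑ = -((k:ℝ) * |Real.log ϑ|) := by rw [habs]; ring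
          _ ≤ -(2 * (R:ℝ) * Real.log Λ + A + 2 * |Real.log ℓ|) := by linarith
          _ ≤ -Real.log E := by linarith
      have hB0 : 0 ≤ Z (R - 1) / mass := by
        rw [h1]; positivity
      have hprod : ϑ ^ k * (Z (R - 1) / mass) ≤ 1 := by
        calc ϑ ^ k * (Z (R - 1) / mass) ≤ E⁻¹ * E :=
              mul_le_mul hϑkE hBE hB0 (by positivity)
          _ = 1 := inv_mul_cancel₀ hEpos.ne'
      have hc := hcontr n hn'
      rw [← hkdef] at hc
      have hZn : Z n / mass ≤ C_p := by nlinarith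
      calc Z n = Z n / mass * mass := by field_simp
        _ ≤ C_p * mass := mul_le_mul_of_nonneg_right hZn hm.le
  refine ⟨hBE, part2, ?_⟩
  -- third bullet
  intro n hn
  have key : ((R:ℝ) - 1) +
        (2 * (R:ℝ) * Real.log Λ + A + 2 * |Real.log ℓ|) / |Real.log ϑ|
      ≤ (1 + (2 * Real.log Λ + A + 2) / |Real.log ϑ|) * ((R:ℝ) + |Real.log ℓ|) := by
    rw [div_eq_mul_inv, div_eq_mul_inv]
    have hu : (0:ℝ) < |Real.log ϑ|⁻¹ := by positivity
    nlinarith [mul_nonneg hu.le (mul_nonneg hA0 (sub_nonneg.mpr hRr)),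
      mul_nonneg hu.le hx0,
      mul_nonneg (mul_nonneg hu.le hL.le) hx0,
      mul_nonneg (mul_nonneg hu.le hA0) hx0,
      mul_nonneg hu.le (le_trans zero_le_one hRr)]
  exact part2 n (le_trans key hn)
end
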